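/- Let d ≥ 1 be an integer, let ε > 0 be a real number, and let G be a finite simple d-regular graph with |V(G)| ≥ 2 that is an ε-edge-expander. Then tw(G) ≥ ε·|V(G)|/(4d) − 1. -/

import Mathlib

/-- A tree decomposition of a finite simple graph `G`. -/
structure TreeDecomp {V : Type} [Fintype V] (G : SimpleGraph V) : Type 1 where
  ι : Type
  instFin : Fintype ι
  T : SimpleGraph ι
  isTree : T.IsTree
  bag : ι → Finset V
  bag_cover : ∀ v : V, ∃ t : ι, v ∈ bag t
  bag_edge : ∀ u v : V, G.Adj u v → ∃ t : ι, u ∈ bag t ∧ v ∈ bag t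
  bag_conn : ∀ v : V, (T.induce {t : ι | v ∈ bag t}).Connected

/-- The width of a tree decomposition: `max_t |B_t| - 1`. -/
noncomputable def TreeDecomp.width {V : Type} [Fintype V] {G : SimpleGraph V}
    (D : TreeDecomp G) : ℕ :=
  (@Finset.univ D.ι D.instFin).sup (fun t => (D.bag t).card) - 1

/-- The treewidth of a finite simple graph. -/
noncomputable def treewidth {V : Type} [Fintype V] (G : SimpleGraph V) : ℕ :=
  sInf {n : ℕ | ∃ D : TreeDecomp G, D.width = n}


/-- The number of edges of `G` with exactly one endpoint in `S`. -/
noncomputable def edgeBoundary {V : Type} (G : SimpleGraph V) (S : Finset V) : ℕ :=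
  Set.ncard {e : Sym2 V | e ∈ G.edgeSet ∧ (∃ x ∈ e, x ∈ S) ∧ (∃ y ∈ e, y ∉ S)}

/-- `G` is an `ε`-edge-expander: every set `S` of at most half the vertices has
edge boundary of size at least `ε·|S|`. -/
def IsEdgeExpander {V : Type} [Fintype V] (G : SimpleGraph V) (ε : ℝ) : Prop :=
  ∀ S : Finset V, (S.card : ℝ) ≤ (Fintype.card V : ℝ) / 2 →
    ε * (S.card : ℝ) ≤ (edgeBoundary G S : ℝ)

/-!
Every tree decomposition has a bag `B` (the bag of a centroid of the tree, weighted by the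
vertices of `G`) such that the components of `G - B` can be grouped into a vertex set `S` with
`n/4 ≤ |S| ≤ n/2` whose boundary edges all meet `B`. Hence `ε n/4 ≤ ε |S| ≤ |∂S| ≤ d |B|`, unless
some bag already has more than `n/4` vertices, in which case `ε ≤ d` (test expansion on a single
vertex) gives the bound directly.
-/

open Finset

namespace SimpleGraph.IsTree

variable {ι : Type*} {T : SimpleGraph ι} (hT : T.IsTree)

/-- The neighbour of `t` on the path from `t` to `x` (or `t` itself when `x = t`). -/
noncomputable def firstStep (t x : ι) : ι := (hT.existsUnique_path t x).choose.snd

lemma firstStep_eq_snd {t x : ι} (p : T.Walk t x) (hp : p.IsPath) : hT.firstStep t x = p.snd := by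
  rw [firstStep, (hT.existsUnique_path t x).unique (hT.existsUnique_path t x).choose_spec.1 hp]

lemma adj_firstStep {t x : ι} (hx : x ≠ t) : T.Adj t (hT.firstStep t x) :=
  Walk.adj_snd (Walk.not_nil_of_ne hx.symm)

lemma firstStep_eq_of_mem_support {t x z : ι} (hx : x ≠ t) (q : T.Walk t z) (hq : q.IsPath)
    (hxq : x ∈ q.support) : hT.firstStep t x = hT.firstStep t z := by
  classical
  rw [hT.firstStep_eq_snd _ (hq.takeUntil hxq), Walk.snd_takeUntil hx, hT.firstStep_eq_snd q hq]

lemma firstStep_eq_of_adj {t x y : ι} (hx : x ≠ t) (hy : y ≠ t) (hxy : T.Adj x y) :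
    hT.firstStep t x = hT.firstStep t y := by
  obtain ⟨p, hp, -⟩ := hT.existsUnique_path t x
  by_cases hyp : y ∈ p.support
  · exact (hT.firstStep_eq_of_mem_support hy p hp hyp).symm
  · exact hT.firstStep_eq_of_mem_support hx _ (hp.concat hyp hxy) (by simp)

lemma firstStep_eq_of_reachable_induce {t : ι} {W : Set ι} (ht : t ∉ W) {a b : W}
    (hab : (T.induce W).Reachable a b) : hT.firstStep t a = hT.firstStep t b := by
  obtain ⟨p⟩ := hab
  induction p with
  | nil => rfl
  | @cons u v _ huv _ ih =>
    exact (hT.firstStep_eq_of_adj (ne_of_mem_of_not_mem u.2 ht) (ne_of_mem_of_not_mem v.2 ht)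
      huv).trans ih

lemma firstStep_firstStep_ne {t x : ι} (hxt : x ≠ t) :
    hT.firstStep (hT.firstStep t x) x ≠ t := by
  obtain ⟨p, hp, -⟩ := hT.existsUnique_path t x
  have hnil : ¬p.Nil := Walk.not_nil_of_ne hxt.symm
  rw [hT.firstStep_eq_snd p hp, hT.firstStep_eq_snd _ hp.tail]
  have htail : t ∉ p.tail.support := by
    rw [← Walk.cons_tail_eq p hnil, Walk.cons_isPath_iff] at hp
    exact hp.2
  intro h
  exact htail (by convert p.tail.getVert_mem_support 1; exact h.symm)

/-- If every node `t` had a branch `g t` receiving more than half of `α`, then `t ↦ s(t, g t)`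
would inject the nodes into the edges, since no edge is heavy in both directions. -/
theorem exists_centroid [Fintype ι] [DecidableEq ι] {α : Type*} [Fintype α] (f : α → ι) :
    ∃ t, ∀ s, 2 * #{a | f a ≠ t ∧ hT.firstStep t (f a) = s} ≤ Fintype.card α := by
  classical
  set w : ι → ι → ℕ := fun t s => #{a | f a ≠ t ∧ hT.firstStep t (f a) = s}
  have hw_add : ∀ t s, w t s + w s t ≤ Fintype.card α := fun t s => by
    rw [← card_union_of_disjoint]
    · exact card_le_univ _
    · refine disjoint_filter.mpr fun a _ ⟨hat, hts⟩ ⟨_, hst⟩ => ?_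
      exact hT.firstStep_firstStep_ne hat (hts ▸ hst)
  have hw_adj : ∀ t s, 0 < w t s → T.Adj t s := fun t s hpos => by
    obtain ⟨a, ha⟩ := card_pos.mp hpos
    obtain ⟨hat, hts⟩ := (mem_filter.mp ha).2
    exact hts ▸ hT.adj_firstStep hat
  by_contra! hheavy
  choose g hg using hheavy
  replace hg : ∀ t, Fintype.card α < 2 * w t (g t) := hg
  have hinj : Set.InjOn (fun t => s(t, g t)) (univ : Finset ι) := by
    intro t _ t' _ htt'
    rcases Sym2.eq_iff.mp htt' with ⟨h, -⟩ | ⟨h, h'⟩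
    · exact h
    · have h1 := hg t
      have h2 := hg t'
      rw [h'] at h1
      rw [← h] at h2
      have := hw_add t t'
      omega
  have hle := card_le_card_of_injOn _ (fun t _ => (mem_edgeFinset.mpr
    (hw_adj t (g t) (by have := hg t; omega)))) hinj
  have := hT.card_edgeFinset
  simp only [card_univ] at hle
  omega

end SimpleGraph.IsTree

theorem Finset.exists_subset_sum_mem_Icc {α R : Type*} [Field R] [LinearOrder R]
    [IsStrictOrderedRing R] (w : α → R) {c : R} (hc : 0 ≤ c) (F : Finset α)
    (hw : ∀ a ∈ F, w a ≤ 2 * c) (hF : c ≤ ∑ a ∈ F, w a) :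
    ∃ A ⊆ F, ∑ a ∈ A, w a ∈ Set.Icc c (2 * c) := by
  classical
  induction F using Finset.induction_on with
  | empty => exact ⟨∅, empty_subset _, by simp_all⟩
  | @insert a F haF ih =>
    rw [sum_insert haF] at hF
    by_cases hFc : c ≤ ∑ x ∈ F, w x
    · obtain ⟨A, hAF, hA⟩ := ih (fun x hx => hw x (mem_insert_of_mem hx)) hFc
      exact ⟨A, hAF.trans (subset_insert a F), hA⟩
    by_cases hac : c ≤ w a
    · exact ⟨{a}, by simp, by simpa using ⟨hac, hw a (mem_insert_self a F)⟩⟩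
    · refine ⟨insert a F, Subset.rfl, ?_⟩
      rw [sum_insert haF]
      constructor <;> linarith

theorem edgeBoundary_le_sum_degree {V : Type} [Fintype V] (G : SimpleGraph V)
    [DecidableRel G.Adj] (S B : Finset V)
    (hB : ∀ u v, G.Adj u v → u ∈ S → v ∉ S → u ∈ B ∨ v ∈ B) :
    edgeBoundary G S ≤ ∑ b ∈ B, G.degree b := by
  classical
  calc edgeBoundary G S ≤ #(B.biUnion fun b => G.incidenceFinset b) := by
        rw [edgeBoundary, ← Set.ncard_coe_finset]
        refine Set.ncard_le_ncard ?_ (Finset.finite_toSet _)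
        rintro e ⟨he, ⟨x, hxe, hxS⟩, ⟨y, hye, hyS⟩⟩
        obtain rfl := (Sym2.mem_and_mem_iff (ne_of_mem_of_not_mem hxS hyS)).mp ⟨hxe, hye⟩
        simp only [coe_biUnion, Set.mem_iUnion, mem_coe, G.mem_incidenceFinset, exists_prop]
        rcases hB x y he hxS hyS with hx | hy
        exacts [⟨x, hx, he, hxe⟩, ⟨y, hy, he, hye⟩]
    _ ≤ ∑ b ∈ B, #(G.incidenceFinset b) := card_biUnion_le
    _ = ∑ b ∈ B, G.degree b := by simp only [G.card_incidenceFinset_eq_degree]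

theorem IsEdgeExpander.le_degree {V : Type} [Fintype V] {G : SimpleGraph V}
    [DecidableRel G.Adj] {ε : ℝ} (hexp : IsEdgeExpander G ε) (hV : 2 ≤ Fintype.card V) (v : V) : ε ≤ G.degree v := by
  have hV' : (2 : ℝ) ≤ Fintype.card V := by exact_mod_cast hV
  have hv := hexp {v} (by rw [card_singleton]; linarith)
  have hdeg := edgeBoundary_le_sum_degree G {v} {v} fun u _ _ hu _ => .inl hu
  rw [card_singleton, Nat.cast_one, mul_one] at hv
  rw [sum_singleton] at hdeg
  exact hv.trans (by exact_mod_cast hdeg)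

namespace TreeDecomp

variable {V : Type} [Fintype V] {G : SimpleGraph V} (D : TreeDecomp G)

attribute [local instance] TreeDecomp.instFin

lemma card_bag_le_width_add_one (t : D.ι) : #(D.bag t) ≤ D.width + 1 := by
  have := le_sup (f := fun t => #(D.bag t)) (mem_univ t)
  unfold width
  omega

noncomputable def home (v : V) : D.ι := (D.bag_cover v).choose

lemma mem_bag_home (v : V) : v ∈ D.bag (D.home v) := (D.bag_cover v).choose_spec

/-- For `v ∉ D.bag t`, the neighbour of `t` towards the bags containing `v`. -/
noncomputable def branch (t : D.ι) (v : V) : D.ι := D.isTree.firstStep t (D.home v)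

lemma firstStep_eq_branch {t i : D.ι} {v : V} (hvt : v ∉ D.bag t) (hvi : v ∈ D.bag i) :
    D.isTree.firstStep t i = D.branch t v :=
  D.isTree.firstStep_eq_of_reachable_induce (W := {i | v ∈ D.bag i}) hvt
    ((D.bag_conn v).preconnected ⟨i, hvi⟩ ⟨D.home v, D.mem_bag_home v⟩)

lemma branch_eq_of_adj {t : D.ι} {u v : V} (huv : G.Adj u v) (hu : u ∉ D.bag t)
    (hv : v ∉ D.bag t) : D.branch t u = D.branch t v := by
  obtain ⟨i, hui, hvi⟩ := D.bag_edge u v huv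
  rw [← D.firstStep_eq_branch hu hui, ← D.firstStep_eq_branch hv hvi]

theorem exists_balanced_separator
    (hbag : ∀ t, 4 * #(D.bag t) ≤ 3 * Fintype.card V) :
    ∃ (t : D.ι) (S : Finset V), (Fintype.card V : ℝ) / 4 ≤ #S ∧ (#S : ℝ) ≤ Fintype.card V / 2 ∧
      ∀ u v, G.Adj u v → u ∈ S → v ∉ S → v ∈ D.bag t := by
  classical
  set n := Fintype.card V
  obtain ⟨t, ht⟩ := D.isTree.exists_centroid D.home
  set piece : D.ι → Finset V := fun s => {v ∈ (D.bag t)ᶜ | D.branch t v = s}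
  have hpiece : ∀ s, (#(piece s) : ℝ) ≤ 2 * (n / 4) := fun s => by
    have hsub : piece s ⊆ ({v | D.home v ≠ t ∧ D.isTree.firstStep t (D.home v) = s} : Finset V) :=
      fun v hv => by
        simp only [piece, mem_filter, mem_compl] at hv
        exact mem_filter.mpr ⟨mem_univ v, fun h => hv.1 (h ▸ D.mem_bag_home v), hv.2⟩
    have := (Nat.mul_le_mul_left 2 (card_le_card hsub)).trans (ht s)
    have : (2 * #(piece s) : ℝ) ≤ n := by exact_mod_cast this
    linarith
  have htotal : (n : ℝ) / 4 ≤ ∑ s, (#(piece s) : ℝ) := by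
    have hsum : ∑ s, #(piece s) = #(D.bag t)ᶜ :=
      (card_eq_sum_card_fiberwise fun _ _ => mem_univ _).symm
    rw [← Nat.cast_sum, hsum, card_compl, Nat.cast_sub (card_le_univ _)]
    have : (4 * #(D.bag t) : ℝ) ≤ 3 * n := by exact_mod_cast hbag t
    linarith
  obtain ⟨A, -, hA_ge, hA_le⟩ := exists_subset_sum_mem_Icc (fun s => (#(piece s) : ℝ))
    (by positivity) univ (fun s _ => hpiece s) htotal
  have hcard : #(A.biUnion piece) = ∑ s ∈ A, #(piece s) :=
    card_biUnion fun s _ s' _ hss' => disjoint_filter.mpr fun _ _ hs hs' => hss' (hs ▸ hs')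
  refine ⟨t, A.biUnion piece, ?_, ?_, ?_⟩
  · rw [hcard, Nat.cast_sum]
    exact hA_ge
  · rw [hcard, Nat.cast_sum]
    linarith
  · intro u v huv hu hv
    by_contra hvt
    obtain ⟨s, hs, hus⟩ := mem_biUnion.mp hu
    simp only [piece, mem_filter, mem_compl] at hus
    exact hv (mem_biUnion.mpr ⟨s, hs, by
      simpa [piece, hvt] using (D.branch_eq_of_adj huv hus.1 hvt).symm.trans hus.2⟩)

def oneBag (G : SimpleGraph V) : TreeDecomp G where
  ι := Unit
  instFin := inferInstance
  T := ⊥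
  isTree := ⟨(SimpleGraph.connected_iff _).mpr
    ⟨fun a b => by rw [Subsingleton.elim a b], ⟨()⟩⟩, SimpleGraph.isAcyclic_bot⟩
  bag _ := univ
  bag_cover _ := ⟨(), mem_univ _⟩
  bag_edge u v _ := ⟨(), mem_univ u, mem_univ v⟩
  bag_conn v := (SimpleGraph.connected_iff _).mpr
    ⟨fun a b => by rw [Subsingleton.elim a b], ⟨⟨(), mem_univ v⟩⟩⟩

end TreeDecomp

lemma exists_treeDecomp_width_eq_treewidth {V : Type} [Fintype V] (G : SimpleGraph V) :
    ∃ D : TreeDecomp G, D.width = treewidth G :=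
  Nat.sInf_mem (s := {n | ∃ D : TreeDecomp G, D.width = n}) ⟨_, TreeDecomp.oneBag G, rfl⟩

theorem IsEdgeExpander.mul_card_le_width {V : Type} [Fintype V] {G : SimpleGraph V}
    [DecidableRel G.Adj] {ε : ℝ} {d : ℕ} (hexp : IsEdgeExpander G ε) (hε : 0 ≤ ε)
    (hreg : G.IsRegularOfDegree d) (hV : 2 ≤ Fintype.card V) (D : TreeDecomp G) :
    ε * Fintype.card V ≤ 4 * d * (D.width + 1) := by
  obtain ⟨v⟩ : Nonempty V := Fintype.card_pos_iff.mp (by omega)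
  have hεd : ε ≤ d := hreg v ▸ hexp.le_degree hV v
  by_cases hk : Fintype.card V ≤ 4 * (D.width + 1)
  · have hk' : (Fintype.card V : ℝ) ≤ 4 * (D.width + 1) := by exact_mod_cast hk
    nlinarith
  obtain ⟨t, S, hS_ge, hS_le, hS_bag⟩ := D.exists_balanced_separator fun t => by
    have := D.card_bag_le_width_add_one t
    omega
  have hbdry := edgeBoundary_le_sum_degree G S (D.bag t) fun u v huv hu hv =>
    .inr (hS_bag u v huv hu hv)
  rw [sum_congr rfl fun b _ => hreg b, sum_const, smul_eq_mul] at hbdry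
  have hbdry' : (edgeBoundary G S : ℝ) ≤ #(D.bag t) * d := by exact_mod_cast hbdry
  have hbag : (#(D.bag t) : ℝ) ≤ D.width + 1 := by exact_mod_cast D.card_bag_le_width_add_one t
  have hd : (0 : ℝ) ≤ d := d.cast_nonneg
  nlinarith [hexp S hS_le]

theorem treewidth_ge_of_regular_expander_general
    {V : Type} [Fintype V] (G : SimpleGraph V) [DecidableRel G.Adj]
    (d : ℕ) (hd : 1 ≤ d) (ε : ℝ) (hε : 0 < ε) (hV : 2 ≤ Fintype.card V)
    (hreg : G.IsRegularOfDegree d) (hexp : IsEdgeExpander G ε) :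
    ε * (Fintype.card V : ℝ) / (4 * (d : ℝ)) - 1 ≤ (treewidth G : ℝ) := by
  obtain ⟨D, hD⟩ := exists_treeDecomp_width_eq_treewidth G
  have hd' : (0 : ℝ) < d := by exact_mod_cast hd
  have := hexp.mul_card_le_width hε.le hreg hV D
  rw [← hD, sub_le_iff_le_add, div_le_iff₀ (by positivity)]
  linarith

/-- Let `d ≥ 1`, `ε > 0`, and let `G` be a finite simple `d`-regular
graph with at least two vertices which is an `ε`-edge-expander.  Then
`tw(G) ≥ ε·|V(G)|/(4d) - 1`. -/
theorem treewidth_ge_of_regular_expander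
    {V : Type} [Fintype V] [DecidableEq V] (G : SimpleGraph V) [DecidableRel G.Adj]
    (d : ℕ) (hd : 1 ≤ d) (ε : ℝ) (hε : 0 < ε) (hV : 2 ≤ Fintype.card V)
    (hreg : G.IsRegularOfDegree d) (hexp : IsEdgeExpander G ε) :
    ε * (Fintype.card V : ℝ) / (4 * (d : ℝ)) - 1 ≤ (treewidth G : ℝ) :=
  treewidth_ge_of_regular_expander_general G d hd ε hε hV hreg hexp
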